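/- With the same setup: if detours D₁ and D₂ are dependent (share a vertex) and interleaved with x₁ ≤ x₂ ≤ y₁ ≤ y₂, then (a) if x₁ ≠ x₂ the protected edge e₁ lies on the subpath π(x₁,x₂), and (b) if y₁ ≠ y₂ the protected edge e₂ lies on the subpath π(y₁,y₂). -/

import Mathlib

/-!
Let `u` be a vertex shared by `D₀` and `D₁`. Exchanging the detours at `u` gives the `s`–`v` walks
`Q₀ = π(s,x₁) D₁(x₁,u) D₀(u,y₀) π(y₀,v)` and `Q₁ = π(s,x₀) D₀(x₀,u) D₁(u,y₁) π(y₁,v)`, whose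
weights add up to those of the replacement paths `P₀` and `P₁`. Since a detour shares no edge
with `π`, if `e₀` lay beyond `x₁` then `Q₀` would avoid `e₀` and `Q₁` would avoid `e₁`; both
would then be shortest, and by uniqueness `Q₁` without its loops would be `P₁`, which passes
through `x₁` while `Q₁` does not. Symmetrically, if `e₁` lay before `y₀`, `Q₀` would avoid `e₁`,
`Q₁` would avoid `e₀`, and `Q₁` without its loops would be `P₀`, which passes through `y₀`.
-/

/-- The `W`-weight of a walk: the sum of the weights of its edges. -/
def walkWeight {V : Type*} (W : Sym2 V → ℝ) {G : SimpleGraph V} {u v : V}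
    (p : G.Walk u v) : ℝ := (p.edges.map W).sum

/-- Position of a vertex along a walk (index in its support list); vertices of `π(s,v)` are
ordered by distance from `s`, and `vpos π u < vpos π u'` means `u` is closer to `s`. -/
def vpos {V : Type*} [DecidableEq V] {G : SimpleGraph V} {s v : V}
    (π : G.Walk s v) (u : V) : ℕ := π.support.idxOf u

section

open SimpleGraph

variable {V : Type*} {G : SimpleGraph V}

section walkWeight

variable {W : Sym2 V → ℝ}

theorem walkWeight_append {u v w : V} (p : G.Walk u v) (q : G.Walk v w) :
    walkWeight W (p.append q) = walkWeight W p + walkWeight W q := by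
  simp [walkWeight, Walk.edges_append]

theorem walkWeight_bypass_le [DecidableEq V] (hW : ∀ e, 0 ≤ W e) {u v : V} (p : G.Walk u v) :
    walkWeight W p.bypass ≤ walkWeight W p :=
  (p.edges_bypass_sublist_edges.map W).sum_le_sum (by simp [hW])

theorem walkWeight_takeUntil_add_dropUntil [DecidableEq V] {u v w : V} (p : G.Walk v w)
    (hu : u ∈ p.support) :
    walkWeight W (p.takeUntil u hu) + walkWeight W (p.dropUntil u hu) = walkWeight W p := by
  rw [← walkWeight_append, Walk.take_spec]

end walkWeight

def UniqueShortestPaths (G : SimpleGraph V) (W : Sym2 V → ℝ) : Prop :=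
  ∀ (F : Set (Sym2 V)) (u w : V) (p q : G.Walk u w), p.IsPath → q.IsPath →
    (∀ f ∈ p.edges, f ∉ F) → (∀ f ∈ q.edges, f ∉ F) →
    (∀ r : G.Walk u w, r.IsPath → (∀ f ∈ r.edges, f ∉ F) → walkWeight W p ≤ walkWeight W r) →
    (∀ r : G.Walk u w, r.IsPath → (∀ f ∈ r.edges, f ∉ F) → walkWeight W q ≤ walkWeight W r) →
    p = q

structure IsShortestPathAvoiding (W : Sym2 V → ℝ) (e : Sym2 V) {u v : V} (p : G.Walk u v) :
    Prop where
  isPath : p.IsPath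
  notMem_edges : e ∉ p.edges
  walkWeight_le : ∀ r : G.Walk u v, r.IsPath → e ∉ r.edges → walkWeight W p ≤ walkWeight W r

namespace IsShortestPathAvoiding

variable {W : Sym2 V → ℝ} {s v : V}

theorem eq (huniq : UniqueShortestPaths G W) {e : Sym2 V} {p q : G.Walk s v}
    (hp : IsShortestPathAvoiding W e p) (hq : IsShortestPathAvoiding W e q) : p = q :=
  huniq {e} s v p q hp.isPath hq.isPath
    (fun _ hf hfe => hp.notMem_edges (Set.mem_singleton_iff.mp hfe ▸ hf))
    (fun _ hf hfe => hq.notMem_edges (Set.mem_singleton_iff.mp hfe ▸ hf))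
    (fun r hr hrF => hp.walkWeight_le r hr fun he => hrF e he rfl)
    (fun r hr hrF => hq.walkWeight_le r hr fun he => hrF e he rfl)

theorem bypass_eq_of_walkWeight_add_eq [DecidableEq V] (hW : ∀ e, 0 ≤ W e)
    (huniq : UniqueShortestPaths G W) {e₀ e₁ : Sym2 V} {P₀ P₁ Q₀ Q₁ : G.Walk s v}
    (hP₀ : IsShortestPathAvoiding W e₀ P₀) (hP₁ : IsShortestPathAvoiding W e₁ P₁)
    (hQ₀ : e₀ ∉ Q₀.edges) (hQ₁ : e₁ ∉ Q₁.edges)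
    (hsum : walkWeight W Q₀ + walkWeight W Q₁ = walkWeight W P₀ + walkWeight W P₁) :
    Q₁.bypass = P₁ := by
  have h₀ := hP₀.walkWeight_le _ Q₀.bypass_isPath fun he => hQ₀ (Q₀.edges_bypass_subset_edges he)
  have h₁ := walkWeight_bypass_le hW Q₀
  have h₂ := walkWeight_bypass_le hW Q₁
  refine (hP₁.eq huniq ⟨Q₁.bypass_isPath, fun he => hQ₁ (Q₁.edges_bypass_subset_edges he),
    fun r hr he => ?_⟩).symm
  linarith [hP₁.walkWeight_le r hr he]

end IsShortestPathAvoiding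

variable [DecidableEq V]

theorem SimpleGraph.Walk.IsPath.eq_of_mem_support_takeUntil_of_mem_support_dropUntil
    {u v w x : V} {p : G.Walk v w} (hp : p.IsPath) (hu : u ∈ p.support)
    (h₁ : x ∈ (p.takeUntil u hu).support) (h₂ : x ∈ (p.dropUntil u hu).support) : x = u := by
  have hnd := hp.support_nodup
  rw [← p.take_spec hu, Walk.support_append] at hnd
  rw [← Walk.cons_tail_support, List.mem_cons] at h₂
  exact h₂.resolve_right fun h => List.disjoint_of_nodup_append hnd h₁ h

section vpos

variable {s v u w : V} {π : G.Walk s v}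

theorem eq_of_vpos_eq {b c : V} (hb : b ∈ π.support) (h : vpos π b = vpos π c) : b = c :=
  (List.idxOf_inj hb).mp h

theorem vpos_le_of_mem_support_takeUntil (hu : u ∈ π.support)
    (hw : w ∈ (π.takeUntil u hu).support) : vpos π w ≤ vpos π u := by
  have := (π.takeUntil u hu).length_takeUntil_le_length hw
  rwa [Walk.takeUntil_takeUntil, Walk.length_takeUntil, Walk.length_takeUntil] at this

theorem vpos_le_of_mem_support_dropUntil (hπ : π.IsPath) (hu : u ∈ π.support)
    (hw : w ∈ (π.dropUntil u hu).support) : vpos π u ≤ vpos π w := by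
  by_cases hwt : w ∈ (π.takeUntil u hu).support
  · rw [hπ.eq_of_mem_support_takeUntil_of_mem_support_dropUntil hu hwt hw]
  · have hsplit : π.support = (π.takeUntil u hu).support ++ (π.dropUntil u hu).support.tail := by
      rw [← Walk.support_append, Walk.take_spec]
    have hlen : (π.takeUntil u hu).support.length = vpos π u + 1 := by
      rw [Walk.length_support, Walk.length_takeUntil, vpos]
    have : (π.takeUntil u hu).support.length ≤ vpos π w := by
      rw [vpos, hsplit, List.idxOf_append_of_notMem hwt]
      exact Nat.le_add_right _ _
    omega

end vpos

section replacementWalk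

variable {s v x y x' y' u : V}

def replacementWalk (π : G.Walk s v) (hx : x ∈ π.support) (hy : y ∈ π.support)
    (D : G.Walk x y) : G.Walk s v :=
  (π.takeUntil x hx).append (D.append (π.dropUntil y hy))

def crossWalk (π : G.Walk s v) (hx : x ∈ π.support) (hy' : y' ∈ π.support) (D : G.Walk x y)
    (D' : G.Walk x' y') (hu : u ∈ D.support) (hu' : u ∈ D'.support) : G.Walk s v :=
  replacementWalk π hx hy' ((D.takeUntil u hu).append (D'.dropUntil u hu'))

theorem walkWeight_crossWalk_add_crossWalk (W : Sym2 V → ℝ) (π : G.Walk s v)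
    (hx : x ∈ π.support) (hy : y ∈ π.support) (hx' : x' ∈ π.support) (hy' : y' ∈ π.support)
    (D : G.Walk x y) (D' : G.Walk x' y') (hu : u ∈ D.support) (hu' : u ∈ D'.support) :
    walkWeight W (crossWalk π hx' hy D' D hu' hu) + walkWeight W (crossWalk π hx hy' D D' hu hu') =
      walkWeight W (replacementWalk π hx hy D) + walkWeight W (replacementWalk π hx' hy' D') := by
  simp only [crossWalk, replacementWalk, walkWeight_append]
  linarith [walkWeight_takeUntil_add_dropUntil (W := W) D hu,
    walkWeight_takeUntil_add_dropUntil (W := W) D' hu']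

end replacementWalk

/-- `D` is the detour `D_i` for the failed edge `e_i = s(a, a')` of `π`. -/
structure IsDetour (W : Sym2 V → ℝ) {s v x y : V} (π : G.Walk s v) (D : G.Walk x y) (a a' : V) :
    Prop where
  start_mem : x ∈ π.support
  end_mem : y ∈ π.support
  edge_mem : s(a, a') ∈ π.edges
  vpos_snd : vpos π a' = vpos π a + 1
  vpos_start_le : vpos π x ≤ vpos π a
  vpos_le_end : vpos π a' ≤ vpos π y
  isPath : D.IsPath
  eq_or_eq_of_mem : ∀ u ∈ D.support, u ∈ π.support → u = x ∨ u = y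
  shortest : IsShortestPathAvoiding W s(a, a') (replacementWalk π start_mem end_mem D)

namespace IsDetour

variable {W : Sym2 V → ℝ} {s v x y a a' : V} {π : G.Walk s v} {D : G.Walk x y}

theorem notMem_edges_takeUntil (h : IsDetour W π D a a') :
    s(a, a') ∉ (π.takeUntil x h.start_mem).edges := fun he =>
  h.shortest.notMem_edges (by simp [replacementWalk, Walk.edges_append, he])

theorem notMem_edges (h : IsDetour W π D a a') : s(a, a') ∉ D.edges := fun he =>
  h.shortest.notMem_edges (by simp [replacementWalk, Walk.edges_append, he])

theorem notMem_edges_dropUntil (h : IsDetour W π D a a') :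
    s(a, a') ∉ (π.dropUntil y h.end_mem).edges := fun he =>
  h.shortest.notMem_edges (by simp [replacementWalk, Walk.edges_append, he])

/-- A detour contains no edge of `π`: such an edge would have to join `x` and `y`, which are then
adjacent on `π`, so it would be the failed edge itself. -/
theorem notMem_edges_of_mem_edges (h : IsDetour W π D a a') {b b' : V}
    (hb : s(b, b') ∈ π.edges) (hbb : vpos π b' = vpos π b + 1) : s(b, b') ∉ D.edges := by
  intro hbD
  have := h.vpos_start_le
  have := h.vpos_le_end
  have := h.vpos_snd
  rcases h.eq_or_eq_of_mem b (D.fst_mem_support_of_mem_edges hbD)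
    (π.fst_mem_support_of_mem_edges hb) with rfl | rfl <;>
  rcases h.eq_or_eq_of_mem b' (D.snd_mem_support_of_mem_edges hbD)
    (π.snd_mem_support_of_mem_edges hb) with rfl | rfl
  · omega
  · have ha : a = b := eq_of_vpos_eq (π.fst_mem_support_of_mem_edges h.edge_mem) (by omega)
    have ha' : a' = b' := eq_of_vpos_eq (π.snd_mem_support_of_mem_edges h.edge_mem) (by omega)
    apply h.notMem_edges
    rwa [ha, ha']
  · omega
  · omega

variable {x₀ y₀ x₁ y₁ a₀ a₀' a₁ a₁' u : V} {D₀ : G.Walk x₀ y₀} {D₁ : G.Walk x₁ y₁}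

theorem notMem_edges_crossWalk_of_vpos_start_lt (h₀ : IsDetour W π D₀ a₀ a₀')
    (h₁ : IsDetour W π D₁ a₁ a₁') (hu₀ : u ∈ D₀.support) (hu₁ : u ∈ D₁.support)
    (hlt : vpos π x₀ < vpos π a₁') :
    s(a₁, a₁') ∉ (crossWalk π h₀.start_mem h₁.end_mem D₀ D₁ hu₀ hu₁).edges := by
  simp only [crossWalk, replacementWalk, Walk.edges_append, List.mem_append, or_assoc, not_or]
  refine ⟨fun he => ?_, fun he => ?_, fun he => ?_, h₁.notMem_edges_dropUntil⟩
  · have := vpos_le_of_mem_support_takeUntil h₀.start_mem (Walk.snd_mem_support_of_mem_edges _ he)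
    omega
  · exact h₀.notMem_edges_of_mem_edges h₁.edge_mem h₁.vpos_snd
      (D₀.edges_takeUntil_subset_edges hu₀ he)
  · exact h₁.notMem_edges (D₁.edges_dropUntil_subset_edges hu₁ he)

theorem notMem_edges_crossWalk_of_lt_vpos_end (hπ : π.IsPath) (h₀ : IsDetour W π D₀ a₀ a₀')
    (h₁ : IsDetour W π D₁ a₁ a₁') (hu₀ : u ∈ D₀.support) (hu₁ : u ∈ D₁.support)
    (hlt : vpos π a₀ < vpos π y₁) :
    s(a₀, a₀') ∉ (crossWalk π h₀.start_mem h₁.end_mem D₀ D₁ hu₀ hu₁).edges := by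
  simp only [crossWalk, replacementWalk, Walk.edges_append, List.mem_append, or_assoc, not_or]
  refine ⟨h₀.notMem_edges_takeUntil, fun he => ?_, fun he => ?_, fun he => ?_⟩
  · exact h₀.notMem_edges (D₀.edges_takeUntil_subset_edges hu₀ he)
  · exact h₁.notMem_edges_of_mem_edges h₀.edge_mem h₀.vpos_snd
      (D₁.edges_dropUntil_subset_edges hu₁ he)
  · have := vpos_le_of_mem_support_dropUntil hπ h₁.end_mem
      (Walk.fst_mem_support_of_mem_edges _ he)
    omega

theorem start_notMem_support_crossWalk (hπ : π.IsPath) (h₀ : IsDetour W π D₀ a₀ a₀')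
    (h₁ : IsDetour W π D₁ a₁ a₁') (hu₀ : u ∈ D₀.support) (hu₁ : u ∈ D₁.support)
    (hx : vpos π x₀ ≤ vpos π x₁) (hne : x₀ ≠ x₁) (hlt : vpos π x₁ < vpos π a₀') :
    x₁ ∉ (crossWalk π h₀.start_mem h₁.end_mem D₀ D₁ hu₀ hu₁).support := by
  have := h₀.vpos_le_end
  have := h₁.vpos_start_le
  have := h₁.vpos_snd
  have := h₁.vpos_le_end
  have hD₀ : x₁ ∉ D₀.support := fun hx₁ => by
    rcases h₀.eq_or_eq_of_mem x₁ hx₁ h₁.start_mem with h | h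
    · exact hne h.symm
    · rw [h] at hlt
      omega
  simp only [crossWalk, replacementWalk, Walk.mem_support_append_iff, or_assoc, not_or]
  refine ⟨fun hmem => ?_, fun hmem => hD₀ (D₀.support_takeUntil_subset_support hu₀ hmem),
    fun hmem => ?_, fun hmem => ?_⟩
  · have := vpos_le_of_mem_support_takeUntil h₀.start_mem hmem
    exact hne (eq_of_vpos_eq h₀.start_mem (by omega))
  · have hu : x₁ = u := h₁.isPath.eq_of_mem_support_takeUntil_of_mem_support_dropUntil hu₁
      (D₁.takeUntil u hu₁).start_mem_support hmem
    exact hD₀ (hu ▸ hu₀)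
  · have := vpos_le_of_mem_support_dropUntil hπ h₁.end_mem hmem
    omega

theorem end_notMem_support_crossWalk (hπ : π.IsPath) (h₀ : IsDetour W π D₀ a₀ a₀')
    (h₁ : IsDetour W π D₁ a₁ a₁') (hu₀ : u ∈ D₀.support) (hu₁ : u ∈ D₁.support)
    (hy : vpos π y₀ ≤ vpos π y₁) (hne : y₀ ≠ y₁) (hlt : vpos π a₁ < vpos π y₀) :
    y₀ ∉ (crossWalk π h₀.start_mem h₁.end_mem D₀ D₁ hu₀ hu₁).support := by
  have := h₀.vpos_start_le
  have := h₀.vpos_snd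
  have := h₀.vpos_le_end
  have := h₁.vpos_start_le
  have hD₁ : y₀ ∉ D₁.support := fun hy₀ => by
    rcases h₁.eq_or_eq_of_mem y₀ hy₀ h₀.end_mem with h | h
    · rw [h] at hlt
      omega
    · exact hne h
  simp only [crossWalk, replacementWalk, Walk.mem_support_append_iff, or_assoc, not_or]
  refine ⟨fun hmem => ?_, fun hmem => ?_,
    fun hmem => hD₁ (D₁.support_dropUntil_subset_support hu₁ hmem), fun hmem => ?_⟩
  · have := vpos_le_of_mem_support_takeUntil h₀.start_mem hmem
    omega
  · have hu : y₀ = u := h₀.isPath.eq_of_mem_support_takeUntil_of_mem_support_dropUntil hu₀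
      hmem (D₀.dropUntil u hu₀).end_mem_support
    exact hD₁ (hu ▸ hu₁)
  · have := vpos_le_of_mem_support_dropUntil hπ h₁.end_mem hmem
    exact hne (eq_of_vpos_eq h₀.end_mem (by omega))

theorem vpos_snd_le_of_vpos_start_le (hW : ∀ e, 0 ≤ W e) (huniq : UniqueShortestPaths G W)
    (hπ : π.IsPath) (h₀ : IsDetour W π D₀ a₀ a₀') (h₁ : IsDetour W π D₁ a₁ a₁')
    (hu₀ : u ∈ D₀.support) (hu₁ : u ∈ D₁.support) (hx : vpos π x₀ ≤ vpos π x₁) (hne : x₀ ≠ x₁) :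
    vpos π a₀' ≤ vpos π x₁ := by
  by_contra! hlt
  have := h₁.vpos_start_le
  have := h₁.vpos_snd
  have hbypass := h₀.shortest.bypass_eq_of_walkWeight_add_eq hW huniq h₁.shortest
    (h₁.notMem_edges_crossWalk_of_vpos_start_lt h₀ hu₁ hu₀ hlt)
    (h₀.notMem_edges_crossWalk_of_vpos_start_lt h₁ hu₀ hu₁ (by omega))
    (walkWeight_crossWalk_add_crossWalk W π _ _ _ _ D₀ D₁ hu₀ hu₁)
  refine h₀.start_notMem_support_crossWalk hπ h₁ hu₀ hu₁ hx hne hlt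
    (Walk.support_bypass_subset_support _ ?_)
  rw [hbypass]
  simp [replacementWalk]

theorem vpos_end_le_fst_of_vpos_end_le (hW : ∀ e, 0 ≤ W e) (huniq : UniqueShortestPaths G W)
    (hπ : π.IsPath) (h₀ : IsDetour W π D₀ a₀ a₀') (h₁ : IsDetour W π D₁ a₁ a₁')
    (hu₀ : u ∈ D₀.support) (hu₁ : u ∈ D₁.support) (hy : vpos π y₀ ≤ vpos π y₁) (hne : y₀ ≠ y₁) :
    vpos π y₀ ≤ vpos π a₁ := by
  by_contra! hlt
  have := h₀.vpos_snd
  have := h₀.vpos_le_end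
  have hbypass := h₁.shortest.bypass_eq_of_walkWeight_add_eq hW huniq h₀.shortest
    (h₁.notMem_edges_crossWalk_of_lt_vpos_end hπ h₀ hu₁ hu₀ hlt)
    (h₀.notMem_edges_crossWalk_of_lt_vpos_end hπ h₁ hu₀ hu₁ (by omega))
    ((walkWeight_crossWalk_add_crossWalk W π _ _ _ _ D₀ D₁ hu₀ hu₁).trans (add_comm _ _))
  refine h₀.end_notMem_support_crossWalk hπ h₁ hu₀ hu₁ hy hne hlt
    (Walk.support_bypass_subset_support _ ?_)
  rw [hbypass]
  simp [replacementWalk]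

end IsDetour

end

theorem dependent_interleaved_detours_fault_location_general {V : Type*} [DecidableEq V]
    (G : SimpleGraph V) (W : Sym2 V → ℝ) (hW : ∀ e, 0 < W e)
    (huniq : ∀ (s' : Set (Sym2 V)) (u w : V) (p q : G.Walk u w), p.IsPath → q.IsPath →
      (∀ f ∈ p.edges, f ∉ s') → (∀ f ∈ q.edges, f ∉ s') →
      (∀ r : G.Walk u w, r.IsPath → (∀ f ∈ r.edges, f ∉ s') →
        walkWeight W p ≤ walkWeight W r) →
      (∀ r : G.Walk u w, r.IsPath → (∀ f ∈ r.edges, f ∉ s') →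
        walkWeight W q ≤ walkWeight W r) →
      p = q)
    (s v : V) (π : G.Walk s v) (hπ : π.IsPath)
    (x y a a' : Fin 2 → V)
    (hx : ∀ i, x i ∈ π.support) (hy : ∀ i, y i ∈ π.support)
    (ha : ∀ i, s(a i, a' i) ∈ π.edges)
    (hconsec : ∀ i, vpos π (a' i) = vpos π (a i) + 1)
    (hbetween : ∀ i, vpos π (x i) ≤ vpos π (a i) ∧ vpos π (a' i) ≤ vpos π (y i))
    (D : (i : Fin 2) → G.Walk (x i) (y i))
    (hDpath : ∀ i, (D i).IsPath)
    (hintern : ∀ i, ∀ u ∈ (D i).support, u ∈ π.support → u = x i ∨ u = y i)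
    (hPpath : ∀ i,
      ((π.takeUntil (x i) (hx i)).append ((D i).append (π.dropUntil (y i) (hy i)))).IsPath)
    (hPavoid : ∀ i, s(a i, a' i) ∉
      ((π.takeUntil (x i) (hx i)).append ((D i).append (π.dropUntil (y i) (hy i)))).edges)
    (hPopt : ∀ i, ∀ R : G.Walk s v, R.IsPath → s(a i, a' i) ∉ R.edges →
      walkWeight W
        ((π.takeUntil (x i) (hx i)).append ((D i).append (π.dropUntil (y i) (hy i)))) ≤
      walkWeight W R)
    (hdep : ∃ u, u ∈ (D 0).support ∧ u ∈ (D 1).support)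
    (horder1 : vpos π (x 0) ≤ vpos π (x 1))
    (horder3 : vpos π (y 0) ≤ vpos π (y 1)) :
    (x 0 ≠ x 1 → vpos π (x 0) ≤ vpos π (a 0) ∧ vpos π (a' 0) ≤ vpos π (x 1)) ∧
    (y 0 ≠ y 1 → vpos π (y 0) ≤ vpos π (a 1) ∧ vpos π (a' 1) ≤ vpos π (y 1)) := by
  obtain ⟨u, hu₀, hu₁⟩ := hdep
  have hD : ∀ i, IsDetour W π (D i) (a i) (a' i) := fun i =>
    ⟨hx i, hy i, ha i, hconsec i, (hbetween i).1, (hbetween i).2, hDpath i, hintern i,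
      ⟨hPpath i, hPavoid i, hPopt i⟩⟩
  have hW' : ∀ e, 0 ≤ W e := fun e => (hW e).le
  exact ⟨fun hne => ⟨(hbetween 0).1,
      (hD 0).vpos_snd_le_of_vpos_start_le hW' huniq hπ (hD 1) hu₀ hu₁ horder1 hne⟩,
    fun hne => ⟨(hD 0).vpos_end_le_fst_of_vpos_end_le hW' huniq hπ (hD 1) hu₀ hu₁ horder3 hne,
      (hbetween 1).2⟩⟩

/-- Setup of single-failure replacement-path detours: `π = π(s,v)` is the
unique shortest path; for `i ∈ {0,1}`, the failed edge is `e_i = s(a i, a' i) ∈ π` lying on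
`π` between `x i` and `y i`; the replacement path
`P_i = π(s, x_i) ∘ D_i ∘ π(y_i, v)` is a shortest `s–v` path avoiding `e_i`, the detour
`D_i` is internally vertex-disjoint from `π`, and its starting point `x i` is the divergence
point closest to `s` among all optimal replacement paths (hypothesis `hmin`).  Shortest
paths in every edge-deleted subgraph are unique under `W` (hypothesis `huniq`).
**Statement 8.** Conclusion: if `D 0` and `D 1` are dependent (share a vertex) and
interleaved with `x 0 ≤ x 1 ≤ y 0 ≤ y 1`, then (a) if `x 0 ≠ x 1` the failed edge `e₁` lies
on `π(x 0, x 1)`, and (b) if `y 0 ≠ y 1` the failed edge `e₂` lies on `π(y 0, y 1)`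
(edge locations expressed via positions of the edge endpoints along `π`). -/
theorem dependent_interleaved_detours_fault_location {V : Type*} [DecidableEq V]
    (G : SimpleGraph V) (W : Sym2 V → ℝ) (hW : ∀ e, 0 < W e)
    (huniq : ∀ (s' : Set (Sym2 V)) (u w : V) (p q : G.Walk u w), p.IsPath → q.IsPath →
      (∀ f ∈ p.edges, f ∉ s') → (∀ f ∈ q.edges, f ∉ s') →
      (∀ r : G.Walk u w, r.IsPath → (∀ f ∈ r.edges, f ∉ s') →
        walkWeight W p ≤ walkWeight W r) →
      (∀ r : G.Walk u w, r.IsPath → (∀ f ∈ r.edges, f ∉ s') →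
        walkWeight W q ≤ walkWeight W r) →
      p = q)
    (s v : V) (π : G.Walk s v) (hπ : π.IsPath)
    (hπopt : ∀ R : G.Walk s v, R.IsPath → walkWeight W π ≤ walkWeight W R)
    (x y a a' : Fin 2 → V)
    (hx : ∀ i, x i ∈ π.support) (hy : ∀ i, y i ∈ π.support)
    (ha : ∀ i, s(a i, a' i) ∈ π.edges)
    (hconsec : ∀ i, vpos π (a' i) = vpos π (a i) + 1)
    (hbetween : ∀ i, vpos π (x i) ≤ vpos π (a i) ∧ vpos π (a' i) ≤ vpos π (y i))
    (D : (i : Fin 2) → G.Walk (x i) (y i))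
    (hDpath : ∀ i, (D i).IsPath)
    (hintern : ∀ i, ∀ u ∈ (D i).support, u ∈ π.support → u = x i ∨ u = y i)
    (hPpath : ∀ i,
      ((π.takeUntil (x i) (hx i)).append ((D i).append (π.dropUntil (y i) (hy i)))).IsPath)
    (hPavoid : ∀ i, s(a i, a' i) ∉
      ((π.takeUntil (x i) (hx i)).append ((D i).append (π.dropUntil (y i) (hy i)))).edges)
    (hPopt : ∀ i, ∀ R : G.Walk s v, R.IsPath → s(a i, a' i) ∉ R.edges →
      walkWeight W
        ((π.takeUntil (x i) (hx i)).append ((D i).append (π.dropUntil (y i) (hy i)))) ≤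
      walkWeight W R)
    (hmin : ∀ i, ∀ (u : V) (hu : u ∈ π.support) (R : G.Walk u v),
      ((π.takeUntil u hu).append R).IsPath →
      s(a i, a' i) ∉ ((π.takeUntil u hu).append R).edges →
      walkWeight W ((π.takeUntil u hu).append R) ≤
        walkWeight W
          ((π.takeUntil (x i) (hx i)).append ((D i).append (π.dropUntil (y i) (hy i)))) →
      0 < R.length → R.getVert 1 ∉ π.support →
      vpos π (x i) ≤ vpos π u)
    (hdep : ∃ u, u ∈ (D 0).support ∧ u ∈ (D 1).support)
    (horder1 : vpos π (x 0) ≤ vpos π (x 1))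
    (horder2 : vpos π (x 1) ≤ vpos π (y 0))
    (horder3 : vpos π (y 0) ≤ vpos π (y 1)) :
    (x 0 ≠ x 1 → vpos π (x 0) ≤ vpos π (a 0) ∧ vpos π (a' 0) ≤ vpos π (x 1)) ∧
    (y 0 ≠ y 1 → vpos π (y 0) ≤ vpos π (a 1) ∧ vpos π (a' 1) ≤ vpos π (y 1)) :=
  dependent_interleaved_detours_fault_location_general G W hW huniq s v π hπ x y a a' hx hy ha
    hconsec hbetween D hDpath hintern hPpath hPavoid hPopt hdep horder1 horder3
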